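/- Theorem 4.2(i), derivative part: under the stated assumptions, the first derivative of the approximate truncated CGF K̃₁(θ) = log(Ξ̂₁(θ, y)/Ξ̂₁(0, y)) satisfies K̃₁'(θ) = y − θ^{-1} + o(θ^{-1}) as θ → ∞ (i.e., θ(K̃₁'(θ) − y) → −1), and the second derivative satisfies K̃₁''(θ) ∼ θ^{-2} as θ → ∞ (i.e., θ² K̃₁''(θ) → 1). -/

import Mathlib

open MeasureTheory Set Filter

/-- The filter on ℝ describing approach to the (possibly infinite) left endpoint
`-α` of the convergence strip from the right: `s ↓ -α`. -/
noncomputable def towardsLowerEndpoint (α : EReal) : Filter ℝ :=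
  Filter.comap (fun s : ℝ => (s : EReal)) (nhdsWithin (-α) (Set.Ioi (-α)))

/-- The filter on ℝ describing approach to the (possibly infinite) right endpoint
`β` of the convergence strip from the left: `s ↑ β`. -/
noncomputable def towardsUpperEndpoint (β : EReal) : Filter ℝ :=
  Filter.comap (fun s : ℝ => (s : EReal)) (nhdsWithin β (Set.Iio β))

/-- The saddlepoint approximation (equation (26)) to the exponential convolution
integral: `Ξ̂₁(θ, y) = [2π(1 + (θ − s)² K₀''(s))]^{-1/2} exp(K₀(s) − (s − θ)y)`,
evaluated at the saddlepoint `s = s_{1,θ}`. -/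
noncomputable def XiHat (K₀ : ℝ → ℝ) (θ y s : ℝ) : ℝ :=
  (Real.sqrt (2 * Real.pi * (1 + (θ - s) ^ 2 * deriv (deriv K₀) s)))⁻¹ *
    Real.exp (K₀ s - (s - θ) * y)

/-- The saddlepoint density approximation
`f̂₀(y) = (2π K₀''(t_y))^{-1/2} exp(K₀(t_y) − t_y y)`. -/
noncomputable def fhatSP (K₀ : ℝ → ℝ) (y t : ℝ) : ℝ :=
  (Real.sqrt (2 * Real.pi * deriv (deriv K₀) t))⁻¹ * Real.exp (K₀ t - t * y)

/-- The approximate truncated CGF `K̃₁(θ) = log(Ξ̂₁(θ, y)/Ξ̂₁(0, y))` (equation (24)). -/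
noncomputable def Ktilde1 (K₀ : ℝ → ℝ) (y : ℝ) (s₁ : ℝ → ℝ) (θ : ℝ) : ℝ :=
  Real.log (XiHat K₀ θ y (s₁ θ) / XiHat K₀ 0 y (s₁ 0))

set_option maxHeartbeats 4000000 in
/-- **Theorem 4.2(i), derivative part**: with `K₀` smooth, `K₀'' > 0` and steep on
`(-α, β)`, `t_y` the saddlepoint for `y` and `s_{1,θ}` the exponential-convolution
saddlepoint, the approximate truncated CGF `K̃₁(θ) = log(Ξ̂₁(θ, y)/Ξ̂₁(0, y))`
satisfies `K̃₁'(θ) = y − θ⁻¹ + o(θ⁻¹)` (i.e. `θ(K̃₁'(θ) − y) → −1`) and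
`K̃₁''(θ) ∼ θ⁻²` (i.e. `θ² K̃₁''(θ) → 1`) as `θ → ∞`. -/
theorem exp_convolution_cgf_derivs_right_tail
    (K₀ : ℝ → ℝ) (α β : EReal) (hα : 0 < α) (hβ : 0 < β)
    (hsmooth : ContDiffOn ℝ (⊤ : ℕ∞) K₀ {s : ℝ | -α < (s : EReal) ∧ (s : EReal) < β})
    (hconv : ∀ s : ℝ, -α < (s : EReal) → (s : EReal) < β → 0 < deriv (deriv K₀) s)
    (hbot : Tendsto (deriv K₀) (towardsLowerEndpoint α) atBot)
    (htop : Tendsto (deriv K₀) (towardsUpperEndpoint β) atTop)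
    (y t_y : ℝ) (hty₁ : -α < (t_y : EReal)) (hty₂ : (t_y : EReal) < β)
    (hty : deriv K₀ t_y = y)
    (s₁ : ℝ → ℝ)
    (hs₁ : ∀ θ : ℝ, -α < (θ : EReal) →
      (-α < (s₁ θ : EReal) ∧ (s₁ θ : EReal) < β ∧ s₁ θ < θ) ∧
        deriv K₀ (s₁ θ) + (θ - s₁ θ)⁻¹ = y) :
    Tendsto (fun θ : ℝ => θ * (deriv (Ktilde1 K₀ y s₁) θ - y)) atTop (nhds (-1)) ∧
      Tendsto (fun θ : ℝ => θ ^ 2 * deriv (deriv (Ktilde1 K₀ y s₁)) θ) atTop (nhds 1) := by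
  set I : Set ℝ := {s : ℝ | -α < (s : EReal) ∧ (s : EReal) < β} with hIdef
  have hIopen : IsOpen I := by
    have : I = (fun s : ℝ => (s : EReal)) ⁻¹' (Set.Ioo (-α) β) := rfl
    rw [this]
    exact (isOpen_Ioo).preimage continuous_coe_real_ereal
  have hIconv : Convex ℝ I := by
    rw [convex_iff_ordConnected]
    constructor
    intro x hx z hz w hw
    exact ⟨lt_of_lt_of_le hx.1 (EReal.coe_le_coe_iff.2 hw.1),
      lt_of_le_of_lt (EReal.coe_le_coe_iff.2 hw.2) hz.2⟩
  have htyI : t_y ∈ I := ⟨hty₁, hty₂⟩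
  -- derivatives notation
  set φ : ℝ → ℝ := deriv K₀ with hφdef
  set K2 : ℝ → ℝ := deriv φ with hK2def
  set K3 : ℝ → ℝ := deriv K2 with hK3def
  set K4 : ℝ → ℝ := deriv K3 with hK4def
  have hφs : ContDiffOn ℝ (⊤ : ℕ∞) φ I := hsmooth.deriv_of_isOpen hIopen (by norm_num)
  have hK2s : ContDiffOn ℝ (⊤ : ℕ∞) K2 I := hφs.deriv_of_isOpen hIopen (by norm_num)
  have hK3s : ContDiffOn ℝ (⊤ : ℕ∞) K3 I := hK2s.deriv_of_isOpen hIopen (by norm_num)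
  have hK4s : ContDiffOn ℝ (⊤ : ℕ∞) K4 I := hK3s.deriv_of_isOpen hIopen (by norm_num)
  have hdφ : ∀ s ∈ I, HasDerivAt φ (K2 s) s := fun s hs =>
    ((hφs.differentiableOn (by simp)).differentiableAt (hIopen.mem_nhds hs)).hasDerivAt
  have hdK2 : ∀ s ∈ I, HasDerivAt K2 (K3 s) s := fun s hs =>
    ((hK2s.differentiableOn (by simp)).differentiableAt (hIopen.mem_nhds hs)).hasDerivAt
  have hdK3 : ∀ s ∈ I, HasDerivAt K3 (K4 s) s := fun s hs =>
    ((hK3s.differentiableOn (by simp)).differentiableAt (hIopen.mem_nhds hs)).hasDerivAt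
  have hdK₀ : ∀ s ∈ I, HasDerivAt K₀ (φ s) s := fun s hs =>
    ((hsmooth.differentiableOn (by simp)).differentiableAt (hIopen.mem_nhds hs)).hasDerivAt
  have hK2pos : ∀ s ∈ I, 0 < K2 s := fun s hs => hconv s hs.1 hs.2
  -- φ strictly monotone on I
  have hφmono : StrictMonoOn φ I := by
    apply strictMonoOn_of_deriv_pos hIconv (hφs.continuousOn)
    intro x hx
    rw [hIopen.interior_eq] at hx
    exact hK2pos x hx
  -- basic facts about s₁ for θ > 0
  have hαneg : -α < (0:EReal) := by
    rw [show ((0:EReal)) = -0 by simp]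
    exact EReal.neg_lt_neg_iff.2 hα
  have hθα : ∀ θ : ℝ, 0 < θ → -α < (θ : EReal) := fun θ hθ =>
    lt_trans hαneg (by exact_mod_cast hθ)
  have hsI : ∀ θ : ℝ, 0 < θ → s₁ θ ∈ I := fun θ hθ =>
    ⟨((hs₁ θ (hθα θ hθ)).1).1, ((hs₁ θ (hθα θ hθ)).1).2.1⟩
  have hslt : ∀ θ : ℝ, 0 < θ → s₁ θ < θ := fun θ hθ => ((hs₁ θ (hθα θ hθ)).1).2.2
  have hseq : ∀ θ : ℝ, 0 < θ → φ (s₁ θ) + (θ - s₁ θ)⁻¹ = y := fun θ hθ => (hs₁ θ (hθα θ hθ)).2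
  have hsub : ∀ θ : ℝ, 0 < θ → y - φ (s₁ θ) = (θ - s₁ θ)⁻¹ := by
    intro θ hθ; have := hseq θ hθ; linarith
  have hslt_ty : ∀ θ : ℝ, 0 < θ → s₁ θ < t_y := by
    intro θ hθ
    have h1 : (0:ℝ) < (θ - s₁ θ)⁻¹ := inv_pos.2 (by linarith [hslt θ hθ])
    have h2 : φ (s₁ θ) < φ t_y := by rw [hty]; have := hsub θ hθ; linarith
    by_contra hc
    push_neg at hc
    rcases eq_or_lt_of_le hc with h | h
    · rw [← h] at h2; exact lt_irrefl _ h2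
    · exact absurd (hφmono htyI (hsI θ hθ) h) (by linarith)
  -- the inverse function h
  set h : ℝ → ℝ := fun s => s + (y - φ s)⁻¹ with hhdef
  set J : Set ℝ := I ∩ Set.Iio t_y with hJdef
  have hJopen : IsOpen J := hIopen.inter isOpen_Iio
  have hJconv : Convex ℝ J := hIconv.inter (convex_Iio t_y)
  have hsJ : ∀ θ : ℝ, 0 < θ → s₁ θ ∈ J := fun θ hθ => ⟨hsI θ hθ, hslt_ty θ hθ⟩
  have hφlt : ∀ s ∈ J, φ s < y := by
    intro s hs
    rw [← hty]
    exact hφmono hs.1 htyI hs.2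
  have hdh : ∀ s ∈ J, HasDerivAt h (1 + K2 s / (y - φ s) ^ 2) s := by
    intro s hs
    have hne : y - φ s ≠ 0 := by have := hφlt s hs; intro hc; linarith
    have h1 : HasDerivAt (fun s => y - φ s) (-K2 s) s := by
      simpa using (hdφ s hs.1).const_sub y
    have h2 := h1.inv hne
    have := (hasDerivAt_id s).add h2
    refine this.congr_deriv ?_
    field_simp
  have hhs : ∀ θ : ℝ, 0 < θ → h (s₁ θ) = θ := by
    intro θ hθ
    have h1 : y - φ (s₁ θ) = (θ - s₁ θ)⁻¹ := hsub θ hθ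
    have h2 : (0:ℝ) < θ - s₁ θ := by linarith [hslt θ hθ]
    simp only [hhdef, h1, inv_inv]
    ring
  have hhmono : StrictMonoOn h J := by
    apply strictMonoOn_of_deriv_pos hJconv
    · intro s hs
      exact ((hdh s hs).continuousAt.continuousWithinAt)
    · intro x hx
      rw [hJopen.interior_eq] at hx
      rw [(hdh x hx).deriv]
      have := hK2pos x hx.1
      have hne : y - φ x < y - φ x + 1 := by linarith
      positivity
  -- points of J just below t_y
  have hJnear : ∀ a : ℝ, a < t_y → ∃ s' ∈ J, a < s' := by
    intro a ha
    obtain ⟨ε, hε, hball⟩ := Metric.isOpen_iff.1 hIopen t_y htyI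
    set m := max a (t_y - ε / 2) with hmdef
    have h1 : a ≤ m := le_max_left _ _
    have h2 : t_y - ε / 2 ≤ m := le_max_right _ _
    have h3 : m < t_y := max_lt ha (by linarith)
    refine ⟨(m + t_y) / 2, ⟨?_, ?_⟩, ?_⟩
    · apply hball
      rw [Real.ball_eq_Ioo]
      exact ⟨by linarith, by linarith⟩
    · simp only [Set.mem_Iio]; linarith
    · linarith
  -- s₁ → t_y
  have hs₁lim : Tendsto s₁ atTop (nhds t_y) := by
    rw [tendsto_order]
    constructor
    · intro a ha
      obtain ⟨s', hs'J, has'⟩ := hJnear a ha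
      filter_upwards [eventually_gt_atTop (max 0 (h s'))] with θ hθ
      have hθ0 : 0 < θ := lt_of_le_of_lt (le_max_left _ _) hθ
      have hθh : h s' < θ := lt_of_le_of_lt (le_max_right _ _) hθ
      by_contra hc
      push_neg at hc
      have := hhmono.monotoneOn (hsJ θ hθ0) hs'J (hc.trans has'.le)
      rw [hhs θ hθ0] at this
      linarith
    · intro b hb
      filter_upwards [eventually_gt_atTop 0] with θ hθ
      exact lt_trans (hslt_ty θ hθ) hb
  -- continuity of s₁ on (0, ∞)
  have hs₁cont : ∀ θ₀ : ℝ, 0 < θ₀ → ContinuousAt s₁ θ₀ := by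
    intro θ₀ hθ₀
    rw [Metric.continuousAt_iff]
    intro ε' hε'
    set s₀ := s₁ θ₀ with hs₀
    obtain ⟨δ, hδ, hball⟩ := Metric.isOpen_iff.1 hJopen s₀ (hsJ θ₀ hθ₀)
    set ε := min (δ / 2) (ε' / 2) with hεdef
    have hε : 0 < ε := lt_min (by linarith) (by linarith)
    have hmem : ∀ z : ℝ, |z - s₀| ≤ ε → z ∈ J := by
      intro z hz
      apply hball
      rw [Real.ball_eq_Ioo]
      have h1 : ε ≤ δ / 2 := min_le_left _ _
      cases' abs_le.1 hz with h2 h3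
      constructor <;> linarith
    have hU : Set.Ioo (h (s₀ - ε)) (h (s₀ + ε)) ∩ Set.Ioi 0 ∈ nhds θ₀ := by
      apply Filter.inter_mem
      · apply Ioo_mem_nhds
        · have := hhmono (hmem (s₀ - ε) (by rw [show s₀ - ε - s₀ = -ε by ring, abs_neg, abs_of_nonneg hε.le])) (hsJ θ₀ hθ₀) (by linarith)
          rwa [hhs θ₀ hθ₀] at this
        · have := hhmono (hsJ θ₀ hθ₀) (hmem _ (by rw [show s₀ + ε - s₀ = ε by ring, abs_of_nonneg hε.le])) (by linarith)
          rwa [hhs θ₀ hθ₀] at this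
      · exact Ioi_mem_nhds hθ₀
    obtain ⟨δ₂, hδ₂, hδ₂sub⟩ := Metric.mem_nhds_iff.1 hU
    refine ⟨δ₂, hδ₂, ?_⟩
    intro θ hθd
    have hθmem := hδ₂sub hθd
    have hθ0 : 0 < θ := hθmem.2
    have hlow : s₀ - ε < s₁ θ := by
      by_contra hc
      push_neg at hc
      have := hhmono.monotoneOn (hsJ θ hθ0) (hmem _ (by rw [show s₀ - ε - s₀ = -ε by ring, abs_neg, abs_of_nonneg hε.le])) hc
      rw [hhs θ hθ0] at this
      exact absurd hθmem.1.1 (by simp; linarith)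
    have hhigh : s₁ θ < s₀ + ε := by
      by_contra hc
      push_neg at hc
      have := hhmono.monotoneOn (hmem _ (by rw [show s₀ + ε - s₀ = ε by ring, abs_of_nonneg hε.le])) (hsJ θ hθ0) hc
      rw [hhs θ hθ0] at this
      exact absurd hθmem.1.2 (by simp; linarith)
    have : |s₁ θ - s₀| < ε := abs_lt.2 ⟨by linarith, by linarith⟩
    calc dist (s₁ θ) s₀ = |s₁ θ - s₀| := rfl
      _ < ε := this
      _ < ε' := lt_of_le_of_lt (min_le_right _ _) (by linarith)
  -- derivative of s₁
  set D : ℝ → ℝ := fun θ => 1 + (θ - s₁ θ) ^ 2 * K2 (s₁ θ) with hDdef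
  have hDpos : ∀ θ : ℝ, 0 < θ → 0 < D θ := by
    intro θ hθ
    have h1 := hK2pos _ (hsI θ hθ)
    have h2 : (0:ℝ) < θ - s₁ θ := by linarith [hslt θ hθ]
    simp only [hDdef]
    positivity
  have hds₁ : ∀ θ : ℝ, 0 < θ → HasDerivAt s₁ ((D θ)⁻¹) θ := by
    intro θ hθ
    have hhd := hdh (s₁ θ) (hsJ θ hθ)
    have hrw : 1 + K2 (s₁ θ) / (y - φ (s₁ θ)) ^ 2 = D θ := by
      rw [hsub θ hθ]
      have h2 : θ - s₁ θ ≠ 0 := by have := hslt θ hθ; intro hc; linarith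
      simp only [hDdef]
      field_simp
    rw [hrw] at hhd
    have hfg : ∀ᶠ θ' in nhds θ, h (s₁ θ') = θ' := by
      filter_upwards [Ioi_mem_nhds hθ] with θ' hθ'
      exact hhs θ' hθ'
    exact HasDerivAt.of_local_left_inverse (hs₁cont θ hθ) hhd (ne_of_gt (hDpos θ hθ)) hfg
  -- facts at θ = 0
  have hs0I : s₁ 0 ∈ I := ⟨((hs₁ 0 hαneg).1).1, ((hs₁ 0 hαneg).1).2.1⟩
  have hD0pos : 0 < 1 + (0 - s₁ 0) ^ 2 * K2 (s₁ 0) := by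
    have := hK2pos _ hs0I
    positivity
  have hCpos : 0 < XiHat K₀ 0 y (s₁ 0) := by
    rw [XiHat, ← hφdef, ← hK2def]
    have h1 : 0 < 2 * Real.pi * (1 + (0 - s₁ 0) ^ 2 * K2 (s₁ 0)) := by
      have := Real.pi_pos
      positivity
    positivity
  set C : ℝ := XiHat K₀ 0 y (s₁ 0) with hCdef
  set c₀ : ℝ := -(1 / 2) * Real.log (2 * Real.pi) - Real.log C with hc₀def
  set G : ℝ → ℝ := fun θ => K₀ (s₁ θ) - (s₁ θ - θ) * y - (1 / 2) * Real.log (D θ) with hGdef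
  have hKt1G : ∀ θ : ℝ, 0 < θ → Ktilde1 K₀ y s₁ θ = G θ + c₀ := by
    intro θ hθ
    have hD := hDpos θ hθ
    have hpi := Real.pi_pos
    have hXipos : 0 < XiHat K₀ θ y (s₁ θ) := by
      rw [XiHat, ← hφdef, ← hK2def]
      have h1 : 0 < 2 * Real.pi * (1 + (θ - s₁ θ) ^ 2 * K2 (s₁ θ)) := by positivity
      positivity
    rw [Ktilde1, Real.log_div (ne_of_gt hXipos) (ne_of_gt hCpos)]
    rw [XiHat, ← hφdef, ← hK2def]
    have h2D : (0:ℝ) < 2 * Real.pi * (1 + (θ - s₁ θ) ^ 2 * K2 (s₁ θ)) := by positivity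
    rw [Real.log_mul (by positivity) (Real.exp_ne_zero _), Real.log_inv,
      Real.log_exp, Real.log_sqrt h2D.le,
      show 2 * Real.pi * (1 + (θ - s₁ θ) ^ 2 * K2 (s₁ θ)) = 2 * Real.pi * D θ from rfl,
      Real.log_mul (by positivity) (ne_of_gt hD)]
    simp only [hGdef, hc₀def]
    ring
  -- function definitions for derivatives
  set iD : ℝ → ℝ := fun θ => (D θ)⁻¹ with hiDdef
  set D' : ℝ → ℝ := fun θ =>
    2 * (θ - s₁ θ) * (1 - iD θ) * K2 (s₁ θ) + (θ - s₁ θ) ^ 2 * K3 (s₁ θ) * iD θ with hD'def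
  set G1 : ℝ → ℝ := fun θ => y - (θ - s₁ θ)⁻¹ * iD θ - D' θ / (2 * D θ) with hG1def
  have hune : ∀ θ : ℝ, 0 < θ → θ - s₁ θ ≠ 0 := by
    intro θ hθ; have := hslt θ hθ; intro hc; linarith
  have hDne : ∀ θ : ℝ, 0 < θ → D θ ≠ 0 := fun θ hθ => ne_of_gt (hDpos θ hθ)
  -- derivative facts at θ > 0
  have hK0comp : ∀ θ : ℝ, 0 < θ →
      HasDerivAt (fun θ => K₀ (s₁ θ)) (φ (s₁ θ) * iD θ) θ := by
    intro θ hθ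
    exact (hdK₀ _ (hsI θ hθ)).comp θ (hds₁ θ hθ)
  have hK2comp : ∀ θ : ℝ, 0 < θ →
      HasDerivAt (fun θ => K2 (s₁ θ)) (K3 (s₁ θ) * iD θ) θ := by
    intro θ hθ
    exact (hdK2 _ (hsI θ hθ)).comp θ (hds₁ θ hθ)
  have hK3comp : ∀ θ : ℝ, 0 < θ →
      HasDerivAt (fun θ => K3 (s₁ θ)) (K4 (s₁ θ) * iD θ) θ := by
    intro θ hθ
    exact (hdK3 _ (hsI θ hθ)).comp θ (hds₁ θ hθ)
  have hucomp : ∀ θ : ℝ, 0 < θ →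
      HasDerivAt (fun θ => θ - s₁ θ) (1 - iD θ) θ := by
    intro θ hθ
    exact (hasDerivAt_id θ).sub (hds₁ θ hθ)
  have hDd : ∀ θ : ℝ, 0 < θ → HasDerivAt D (D' θ) θ := by
    intro θ hθ
    have h1 := (((hucomp θ hθ).pow 2).mul (hK2comp θ hθ)).const_add 1
    refine h1.congr_deriv ?_
    simp only [hD'def, Pi.pow_apply]
    ring
  have hiDd : ∀ θ : ℝ, 0 < θ → HasDerivAt iD (-(D' θ) / (D θ) ^ 2) θ := by
    intro θ hθ
    exact (hDd θ hθ).inv (hDne θ hθ)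
  have hGd : ∀ θ : ℝ, 0 < θ → HasDerivAt G (G1 θ) θ := by
    intro θ hθ
    have h1 := ((hK0comp θ hθ).sub (((hds₁ θ hθ).sub (hasDerivAt_id θ)).mul_const y)).sub
      (((hDd θ hθ).log (hDne θ hθ)).const_mul (1/2 : ℝ))
    refine h1.congr_deriv ?_
    have hφval : φ (s₁ θ) = y - (θ - s₁ θ)⁻¹ := by have := hsub θ hθ; linarith
    simp only [hG1def, hφval, hiDdef]
    generalize D' θ = B
    generalize D θ = A
    ring
  have hKt1d : ∀ θ : ℝ, 0 < θ → HasDerivAt (Ktilde1 K₀ y s₁) (G1 θ) θ := by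
    intro θ hθ
    apply HasDerivAt.congr_of_eventuallyEq ((hGd θ hθ).add_const c₀)
    filter_upwards [Ioi_mem_nhds hθ] with θ' hθ'
    exact hKt1G θ' hθ'
  have hKt1deriv : ∀ θ : ℝ, 0 < θ → deriv (Ktilde1 K₀ y s₁) θ = G1 θ := fun θ hθ =>
    (hKt1d θ hθ).deriv
  -- second derivative
  set D2 : ℝ → ℝ := fun θ =>
    2 * (1 - iD θ) ^ 2 * K2 (s₁ θ) + 2 * (θ - s₁ θ) * (D' θ / (D θ) ^ 2) * K2 (s₁ θ)
      + 2 * (θ - s₁ θ) * (1 - iD θ) * (K3 (s₁ θ) * iD θ)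
      + 2 * (θ - s₁ θ) * (1 - iD θ) * K3 (s₁ θ) * iD θ
      + (θ - s₁ θ) ^ 2 * (K4 (s₁ θ) * iD θ) * iD θ
      + (θ - s₁ θ) ^ 2 * K3 (s₁ θ) * (-(D' θ) / (D θ) ^ 2) with hD2def
  have h1miD : ∀ θ : ℝ, 0 < θ →
      HasDerivAt (fun θ => 1 - iD θ) (D' θ / (D θ) ^ 2) θ := by
    intro θ hθ
    have := (hiDd θ hθ).const_sub 1
    refine this.congr_deriv ?_
    ring
  have hD'd : ∀ θ : ℝ, 0 < θ → HasDerivAt D' (D2 θ) θ := by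
    intro θ hθ
    have h1 := (((hucomp θ hθ).const_mul 2).mul (h1miD θ hθ)).mul (hK2comp θ hθ)
    have h2 := (((hucomp θ hθ).pow 2).mul (hK3comp θ hθ)).mul (hiDd θ hθ)
    have h3 := h1.add h2
    refine h3.congr_deriv ?_
    simp only [hD2def, hiDdef, Pi.mul_apply, Pi.pow_apply]
    generalize D' θ = B
    generalize D θ = A
    ring
  set G2 : ℝ → ℝ := fun θ =>
    -((-(1 - iD θ) / (θ - s₁ θ) ^ 2) * iD θ + (θ - s₁ θ)⁻¹ * (-(D' θ) / (D θ) ^ 2))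
      - (D2 θ * (2 * D θ) - D' θ * (2 * D' θ)) / (2 * D θ) ^ 2 with hG2def
  have hG1d : ∀ θ : ℝ, 0 < θ → HasDerivAt G1 (G2 θ) θ := by
    intro θ hθ
    have hterm2 := ((hucomp θ hθ).inv (hune θ hθ)).mul (hiDd θ hθ)
    have hterm3 := (hD'd θ hθ).div ((hDd θ hθ).const_mul 2)
      (by simpa using hDne θ hθ)
    have h1 := ((hasDerivAt_const θ y).sub hterm2).sub hterm3
    refine h1.congr_deriv ?_
    simp only [hG2def, Pi.inv_apply]
    ring
  have hKt2deriv : ∀ θ : ℝ, 0 < θ → deriv (deriv (Ktilde1 K₀ y s₁)) θ = G2 θ := by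
    intro θ hθ
    have hev : deriv (Ktilde1 K₀ y s₁) =ᶠ[nhds θ] G1 := by
      filter_upwards [Ioi_mem_nhds hθ] with θ' hθ'
      exact hKt1deriv θ' hθ'
    rw [hev.deriv_eq]
    exact (hG1d θ hθ).deriv
  -- base limit facts
  set κ : ℝ := K2 t_y with hκdef
  have hκpos : 0 < κ := hK2pos t_y htyI
  have tu : Tendsto (fun θ => θ - s₁ θ) atTop atTop := by
    apply tendsto_atTop_mono' atTop (f₁ := fun θ => θ - t_y)
    · filter_upwards [eventually_gt_atTop 0] with θ hθ
      have := hslt_ty θ hθ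
      show θ - t_y ≤ θ - s₁ θ
      linarith
    · exact tendsto_atTop_add_const_right atTop (-t_y) tendsto_id
  have tuinv : Tendsto (fun θ => (θ - s₁ θ)⁻¹) atTop (nhds 0) :=
    tendsto_inv_atTop_zero.comp tu
  have tθinv : Tendsto (fun θ : ℝ => θ⁻¹) atTop (nhds 0) := tendsto_inv_atTop_zero
  have tr : Tendsto (fun θ => θ / (θ - s₁ θ)) atTop (nhds 1) := by
    have h1 : Tendsto (fun θ => (θ - s₁ θ) / θ) atTop (nhds 1) := by
      have h2 : Tendsto (fun θ => 1 - s₁ θ * θ⁻¹) atTop (nhds 1) := by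
        have := hs₁lim.mul tθinv
        rw [mul_zero] at this
        simpa using (tendsto_const_nhds (x := (1:ℝ))).sub this
      apply h2.congr'
      filter_upwards [eventually_gt_atTop 0] with θ hθ
      field_simp
    have h3 := h1.inv₀ one_ne_zero
    rw [inv_one] at h3
    apply h3.congr
    intro θ
    rw [inv_div]
  have tcont : ∀ F : ℝ → ℝ, ContDiffOn ℝ (⊤ : ℕ∞) F I →
      Tendsto (fun θ => F (s₁ θ)) atTop (nhds (F t_y)) := by
    intro F hF
    exact ((hF.continuousOn.continuousAt (hIopen.mem_nhds htyI)).tendsto).comp hs₁lim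
  have tK2 : Tendsto (fun θ => K2 (s₁ θ)) atTop (nhds κ) := tcont K2 hK2s
  have tK3 : Tendsto (fun θ => K3 (s₁ θ)) atTop (nhds (K3 t_y)) := tcont K3 hK3s
  have tK4 : Tendsto (fun θ => K4 (s₁ θ)) atTop (nhds (K4 t_y)) := tcont K4 hK4s
  have tusqinv : Tendsto (fun θ => ((θ - s₁ θ) ^ 2)⁻¹) atTop (nhds 0) := by
    have := tuinv.pow 2
    rw [show (0:ℝ) ^ 2 = 0 by norm_num] at this
    apply this.congr
    intro θ
    rw [inv_pow]
  have tDu2 : Tendsto (fun θ => D θ / (θ - s₁ θ) ^ 2) atTop (nhds κ) := by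
    have h1 : Tendsto (fun θ => ((θ - s₁ θ) ^ 2)⁻¹ + K2 (s₁ θ)) atTop (nhds κ) := by
      simpa using tusqinv.add tK2
    apply h1.congr'
    filter_upwards [eventually_gt_atTop 0] with θ hθ
    have hu := hune θ hθ
    simp only [hDdef]
    field_simp
  have ta : Tendsto (fun θ => (θ - s₁ θ) ^ 2 / D θ) atTop (nhds κ⁻¹) := by
    have := tDu2.inv₀ (ne_of_gt hκpos)
    apply this.congr
    intro θ
    rw [inv_div]
  have tiD : Tendsto iD atTop (nhds 0) := by
    have h1 := ta.mul tusqinv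
    rw [mul_zero] at h1
    apply h1.congr'
    filter_upwards [eventually_gt_atTop 0] with θ hθ
    have hu := hune θ hθ
    simp only [hiDdef]
    have hu2 : ((θ - s₁ θ) ^ 2) ≠ 0 := pow_ne_zero 2 hu
    rw [div_mul_eq_mul_div, mul_inv_cancel₀ hu2, one_div]
  have tb : Tendsto (fun θ => (θ - s₁ θ) * D' θ / D θ) atTop (nhds 2) := by
    have h1 : Tendsto (fun θ =>
        2 * (1 - iD θ) * K2 (s₁ θ) * ((θ - s₁ θ) ^ 2 / D θ)
          + K3 (s₁ θ) * ((θ - s₁ θ) ^ 2 / D θ) ^ 2 * (θ - s₁ θ)⁻¹) atTop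
        (nhds (2 * (1 - 0) * κ * κ⁻¹ + K3 t_y * (κ⁻¹) ^ 2 * 0)) := by
      exact ((((tendsto_const_nhds.sub tiD).const_mul 2).mul tK2).mul ta).add
        ((tK3.mul (ta.pow 2)).mul tuinv)
    have h2 : 2 * (1 - 0) * κ * κ⁻¹ + K3 t_y * (κ⁻¹) ^ 2 * 0 = 2 := by
      field_simp
      ring
    rw [h2] at h1
    apply h1.congr'
    filter_upwards [eventually_gt_atTop 0] with θ hθ
    have hu := hune θ hθ
    have hD := hDne θ hθ
    simp only [hD'def, hiDdef]
    revert hu hD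
    generalize K2 (s₁ θ) = P
    generalize K3 (s₁ θ) = Q
    generalize D θ = A
    generalize θ - s₁ θ = U
    intro hu hD
    clear * - hu hD
    field_simp
  have tc : Tendsto (fun θ => θ ^ 2 / D θ) atTop (nhds κ⁻¹) := by
    have h1 := (tr.pow 2).mul ta
    rw [one_pow, one_mul] at h1
    apply h1.congr'
    filter_upwards [eventually_gt_atTop 0] with θ hθ
    have hu := hune θ hθ
    have hu2 : ((θ - s₁ θ) ^ 2) ≠ 0 := pow_ne_zero 2 hu
    generalize D θ = A
    rw [div_pow, div_mul_div_comm, mul_comm (θ ^ 2), mul_div_mul_left _ _ hu2]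
  have tD2 : Tendsto D2 atTop (nhds (2 * κ)) := by
    have h1 : Tendsto (fun θ =>
        2 * (1 - iD θ) ^ 2 * K2 (s₁ θ)
          + 2 * K2 (s₁ θ) * ((θ - s₁ θ) * D' θ / D θ) * iD θ
          + 4 * (1 - iD θ) * K3 (s₁ θ) * ((θ - s₁ θ) ^ 2 / D θ * (θ - s₁ θ)⁻¹)
          + K4 (s₁ θ) * ((θ - s₁ θ) ^ 2 / D θ * iD θ)
          - K3 (s₁ θ) * ((θ - s₁ θ) * D' θ / D θ) * ((θ - s₁ θ) ^ 2 / D θ * (θ - s₁ θ)⁻¹))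
        atTop (nhds (2 * (1 - 0) ^ 2 * κ + 2 * κ * 2 * 0 + 4 * (1 - 0) * K3 t_y * (κ⁻¹ * 0)
          + K4 t_y * (κ⁻¹ * 0) - K3 t_y * 2 * (κ⁻¹ * 0))) := by
      exact (((((((tendsto_const_nhds.sub tiD).pow 2).const_mul 2).mul tK2).add
        (((tK2.const_mul 2).mul tb).mul tiD)).add
        ((((tendsto_const_nhds.sub tiD).const_mul 4).mul tK3).mul (ta.mul tuinv))).add
        (tK4.mul (ta.mul tiD))).sub ((tK3.mul tb).mul (ta.mul tuinv))
    have h2 : 2 * (1 - 0:ℝ) ^ 2 * κ + 2 * κ * 2 * 0 + 4 * (1 - 0) * K3 t_y * (κ⁻¹ * 0)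
        + K4 t_y * (κ⁻¹ * 0) - K3 t_y * 2 * (κ⁻¹ * 0) = 2 * κ := by ring
    rw [h2] at h1
    apply h1.congr'
    filter_upwards [eventually_gt_atTop 0] with θ hθ
    have hu := hune θ hθ
    have hD := hDne θ hθ
    simp only [hD2def, hD'def, hiDdef]
    revert hu hD
    generalize K2 (s₁ θ) = P
    generalize K3 (s₁ θ) = Q
    generalize K4 (s₁ θ) = R
    generalize D θ = A
    generalize θ - s₁ θ = U
    intro hu hD
    clear * - hu hD
    field_simp
    ring
  have goal1 : Tendsto (fun θ : ℝ => θ * (deriv (Ktilde1 K₀ y s₁) θ - y)) atTop (nhds (-1)) := by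
    have h1 : Tendsto (fun θ =>
        -(θ / (θ - s₁ θ) * iD θ) - θ / (θ - s₁ θ) * ((θ - s₁ θ) * D' θ / D θ) / 2)
        atTop (nhds (-(1 * 0) - 1 * 2 / 2)) :=
      ((tr.mul tiD).neg).sub (((tr.mul tb)).div_const 2)
    have h2 : (-(1 * 0) - 1 * 2 / 2 : ℝ) = -1 := by norm_num
    rw [h2] at h1
    apply h1.congr'
    filter_upwards [eventually_gt_atTop 0] with θ hθ
    rw [hKt1deriv θ hθ]
    have hu := hune θ hθ
    have hD := hDne θ hθ
    simp only [hG1def, hiDdef]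
    revert hu hD
    generalize D' θ = B
    generalize D θ = A
    generalize θ - s₁ θ = U
    intro hu hD
    clear * - hu hD
    field_simp
    ring
  have goal2 : Tendsto (fun θ : ℝ => θ ^ 2 * deriv (deriv (Ktilde1 K₀ y s₁)) θ) atTop
      (nhds 1) := by
    have h1 : Tendsto (fun θ =>
        (θ / (θ - s₁ θ)) ^ 2 * iD θ * (1 - iD θ)
          + (θ / (θ - s₁ θ)) ^ 2 * ((θ - s₁ θ) * D' θ / D θ) * iD θ
          - (θ ^ 2 / D θ) * D2 θ / 2
          + (θ / (θ - s₁ θ)) ^ 2 * ((θ - s₁ θ) * D' θ / D θ) ^ 2 / 2)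
        atTop (nhds (1 ^ 2 * 0 * (1 - 0) + 1 ^ 2 * 2 * 0 - κ⁻¹ * (2 * κ) / 2 + 1 ^ 2 * 2 ^ 2 / 2)) := by
      exact (((((tr.pow 2).mul tiD).mul (tendsto_const_nhds.sub tiD)).add
        (((tr.pow 2).mul tb).mul tiD)).sub ((tc.mul tD2).div_const 2)).add
        ((((tr.pow 2).mul (tb.pow 2))).div_const 2)
    have h2 : ((1:ℝ) ^ 2 * 0 * (1 - 0) + 1 ^ 2 * 2 * 0 - κ⁻¹ * (2 * κ) / 2 + 1 ^ 2 * 2 ^ 2 / 2) = 1 := by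
      field_simp
      norm_num
    rw [h2] at h1
    apply h1.congr'
    filter_upwards [eventually_gt_atTop 0] with θ hθ
    rw [hKt2deriv θ hθ]
    have hu := hune θ hθ
    have hD := hDne θ hθ
    simp only [hG2def, hiDdef]
    revert hu hD
    generalize D2 θ = W
    generalize D' θ = B
    generalize D θ = A
    generalize θ - s₁ θ = U
    intro hu hD
    clear * - hu hD
    field_simp
    ring
  exact ⟨goal1, goal2⟩
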